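/- arXiv:2402.17301 — 4 statements merged into one kernel-verified Lean document; each statement's English description precedes it below -/
import Mathlib

section
/- Let G be a real matrix indexed by finite sets I_A × I_B, and let V be a real positive semidefinite matrix indexed by I_B × I_B with V_{yy} = 1 for all y ∈ I_B. Then there exist a dimension d and unit vectors u_x, v_y ∈ ℝ^d (for x ∈ I_A, y ∈ I_B) such that for all x ∈ I_A with ∑_{s,y} G_{xs} G_{xy} V_{sy} ≠ 0, we have √(∑_{s,y ∈ I_B} G_{xs} G_{xy} V_{sy}) = ∑_{y ∈ I_B} G_{xy} ⟨u_x, v_y⟩. -/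
/-!
Factor `V = Bᴴ B`: the columns `v y` of `B` are unit vectors with Gram matrix `V`, so the quadratic
form `∑ s, ∑ y, G x s * G x y * V s y` is `‖w x‖ ^ 2` for `w x = ∑ y, G x y • v y`. A unit vector
`u x` with `⟪u x, w x⟫ = ‖w x‖` (the normalisation of `w x`, or any unit vector if `w x = 0`) then
gives the identity.
-/

open scoped InnerProductSpace

open scoped ComplexOrder in
theorem Matrix.PosSemidef.exists_eq_gram {𝕜 n : Type*} [RCLike 𝕜] [Fintype n]
    {V : Matrix n n 𝕜} (hV : V.PosSemidef) :
    ∃ v : n → EuclideanSpace 𝕜 n, Matrix.gram 𝕜 v = V := by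
  classical
  open scoped MatrixOrder in
  obtain ⟨B, rfl⟩ := CStarAlgebra.nonneg_iff_eq_star_mul_self.mp hV.nonneg
  refine ⟨fun j ↦ WithLp.toLp 2 fun i ↦ B i j, ?_⟩
  ext i j
  simp [Matrix.gram_apply, EuclideanSpace.inner_toLp_toLp, Matrix.mul_apply, dotProduct, mul_comm]

theorem exists_norm_eq_one_real_inner_eq_norm {E : Type*} [NormedAddCommGroup E]
    [InnerProductSpace ℝ E] [Nontrivial E] (w : E) : ∃ u : E, ‖u‖ = 1 ∧ ⟪u, w⟫_ℝ = ‖w‖ := by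
  rcases eq_or_ne w 0 with rfl | hw
  · simpa using exists_norm_eq E zero_le_one
  · refine ⟨‖w‖⁻¹ • w, by simp [norm_smul, hw], ?_⟩
    rw [real_inner_smul_left, real_inner_self_eq_norm_sq]
    field_simp

theorem real_inner_sum_smul_sum_smul {ι E : Type*} [NormedAddCommGroup E]
    [InnerProductSpace ℝ E] (s : Finset ι) (c : ι → ℝ) (v : ι → E) :
    ⟪∑ i ∈ s, c i • v i, ∑ j ∈ s, c j • v j⟫_ℝ = ∑ i ∈ s, ∑ j ∈ s, c i * c j * ⟪v i, v j⟫_ℝ := by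
  simp_rw [sum_inner, real_inner_smul_left, inner_sum, real_inner_smul_right, Finset.mul_sum,
    mul_assoc]

theorem exists_norm_eq_one_sqrt_eq_sum_mul_inner {ι κ E : Type*} [Fintype κ] [NormedAddCommGroup E]
    [InnerProductSpace ℝ E] [Nontrivial E] (G : ι → κ → ℝ) (v : κ → E) :
    ∃ u : ι → E, (∀ x, ‖u x‖ = 1) ∧
      ∀ x, √(∑ s, ∑ y, G x s * G x y * ⟪v s, v y⟫_ℝ) = ∑ y, G x y * ⟪u x, v y⟫_ℝ := by
  choose u hu_norm hu_inner using
    fun x ↦ exists_norm_eq_one_real_inner_eq_norm (∑ y, G x y • v y)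
  refine ⟨u, hu_norm, fun x ↦ ?_⟩
  rw [← real_inner_sum_smul_sum_smul, real_inner_self_eq_norm_sq, Real.sqrt_sq (norm_nonneg _),
    ← hu_inner, inner_sum]
  simp only [real_inner_smul_right]

theorem stmt0_general {IA IB : Type*} [Fintype IA] [Fintype IB] [Nonempty IB]
    (G : IA → IB → ℝ) (V : Matrix IB IB ℝ) (hV : V.PosSemidef)
    (hdiag : ∀ y, V y y = 1) :
    ∃ (d : ℕ) (u : IA → EuclideanSpace ℝ (Fin d)) (v : IB → EuclideanSpace ℝ (Fin d)),
      (∀ x, ‖u x‖ = 1) ∧ (∀ y, ‖v y‖ = 1) ∧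
      ∀ x, (∑ s, ∑ y, G x s * G x y * V s y) ≠ 0 →
        Real.sqrt (∑ s, ∑ y, G x s * G x y * V s y)
          = ∑ y, G x y * ⟪u x, v y⟫_ℝ := by
  obtain ⟨v₀, hv₀⟩ := hV.exists_eq_gram
  let e := LinearIsometryEquiv.piLpCongrLeft 2 ℝ ℝ (Fintype.equivFin IB)
  let v y := e (v₀ y)
  have hv_inner (s y : IB) : ⟪v s, v y⟫_ℝ = V s y := by
    rw [e.inner_map_map, ← hv₀, Matrix.gram_apply]
  have hv_norm (y : IB) : ‖v y‖ = 1 := by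
    rw [norm_eq_sqrt_real_inner, hv_inner, hdiag, Real.sqrt_one]
  obtain ⟨u, hu_norm, hu⟩ := exists_norm_eq_one_sqrt_eq_sum_mul_inner G v
  exact ⟨_, u, v, hu_norm, hv_norm, fun x _ ↦ by simpa only [hv_inner] using hu x⟩

/-- existence of unit vectors realizing the square-root quantity. -/
theorem stmt0 {IA IB : Type*} [Fintype IA] [Fintype IB] [Nonempty IA] [Nonempty IB]
    (G : IA → IB → ℝ) (V : Matrix IB IB ℝ) (hV : V.PosSemidef)
    (hdiag : ∀ y, V y y = 1) :
    ∃ (d : ℕ) (u : IA → EuclideanSpace ℝ (Fin d)) (v : IB → EuclideanSpace ℝ (Fin d)),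
      (∀ x, ‖u x‖ = 1) ∧ (∀ y, ‖v y‖ = 1) ∧
      ∀ x, (∑ s, ∑ y, G x s * G x y * V s y) ≠ 0 →
        Real.sqrt (∑ s, ∑ y, G x s * G x y * V s y)
          = ∑ y, G x y * ⟪u x, v y⟫_ℝ :=
  stmt0_general G V hV hdiag
end

section
/- Let A be a *-algebra over ℂ with self-adjoint generators a_x (x ∈ I_A) and b_y (y ∈ I_B) satisfying a_x² = 1 and b_y² = 1, where the a_x commute with the b_y. Let G be a real I_A × I_B matrix, r ∈ ℝ^{I_A} with r_x > 0, c ∈ ℝ^{I_B}, and suppose the block matrix [[Δ(r), −Gᵀ], [−G, Δ(c)]] is positive semidefinite. Set β := (1/2)(∑_x r_x + ∑_y c_y) and b̂_x := (1/r_x) ∑_y G_{xy} b_y. Then β·1 − ∑_{x,y} G_{xy} a_x b_y = ∑_x (r_x/2)(a_x − b̂_x)² + (1/2) bᵀ(Δ(c) − Gᵀ Δ(r)⁻¹ G) b, where b is the column vector of the b_y, and in particular the right-hand side is a sum of hermitian squares (since Δ(c) − Gᵀ Δ(r)⁻¹ G ⪰ 0). -/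
/-!
Complete the square in each `a x`: since `a x ^ 2 = 1` and `a x` commutes with
`S x = ∑ y, G x y • b y`, we get
`(r x / 2) (a x - S x / r x) ^ 2 = r x / 2 - a x * S x + S x ^ 2 / (2 r x)`.
Summed over `x`, the last terms form the quadratic form of `Gᵀ Δ(r)⁻¹ G` in `b`, while the
quadratic form of `Δ(c)` is the scalar `∑ y, c y` because `b y ^ 2 = 1`; this is the identity.
For the sum of squares, the Schur complement `Δ(c) - Gᵀ Δ(r)⁻¹ G` of the positive definite block
`Δ(r)` is positive semidefinite, hence equal to `Bᵀ B`, and the quadratic form of `Bᵀ B` in the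
self-adjoint `b y` is `∑ i, (∑ y, B i y • b y) ^ 2`.
-/

open Matrix

section RealAlgebra

variable {A : Type*} [Ring A] [Algebra ℝ A] {ι κ : Type*} [Fintype ι] [Fintype κ]

/-- The element `bᵀ M b` of the (noncommutative) algebra `A`. -/
def quadForm (b : ι → A) (M : Matrix ι ι ℝ) : A := ∑ i, ∑ j, M i j • (b i * b j)

theorem quadForm_sub (b : ι → A) (M N : Matrix ι ι ℝ) :
    quadForm b (M - N) = quadForm b M - quadForm b N := by
  simp only [quadForm, Matrix.sub_apply, sub_smul, Finset.sum_sub_distrib]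

theorem quadForm_diagonal [DecidableEq ι] (b : ι → A) (d : ι → ℝ) :
    quadForm b (diagonal d) = ∑ i, d i • (b i * b i) := by
  simp [quadForm, diagonal_apply, ite_smul]

theorem quadForm_transpose_mul_mul (b : ι → A) (B : Matrix κ ι ℝ) (N : Matrix κ κ ℝ) :
    quadForm b (Bᵀ * N * B) = quadForm (fun k => ∑ i, B k i • b i) N := by
  have h : ∀ i j, (Bᵀ * N * B) i j = ∑ k, ∑ l, N k l * (B k i * B l j) := fun i j => by
    simp only [mul_apply, transpose_apply, Finset.sum_mul]
    rw [Finset.sum_comm]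
    exact Finset.sum_congr rfl fun _ _ => Finset.sum_congr rfl fun _ _ => by ring
  simp only [quadForm, h, Finset.sum_mul_sum, Finset.smul_sum, Finset.sum_smul, smul_mul_smul_comm,
    smul_smul]
  rw [Finset.sum_comm_cycle]
  refine Finset.sum_congr rfl fun k _ => ?_
  rw [Finset.sum_comm_cycle]

theorem smul_sq_sub_inv_smul {a s : A} (ha : a * a = 1) (hs : a * s = s * a) {t : ℝ} (ht : t ≠ 0) :
    (t / 2) • (a - t⁻¹ • s) ^ 2 = (t / 2) • (1 : A) - a * s + (1 / 2 : ℝ) • t⁻¹ • (s * s) := by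
  rw [sq, sub_mul, mul_sub, mul_sub, ha, smul_mul_assoc, ← hs, mul_smul_comm, smul_mul_smul_comm]
  match_scalars <;> field_simp; ring

theorem bias_eq_sum_smul_sq_add_quadForm {IA IB : Type*} [Fintype IA] [Fintype IB]
    [DecidableEq IA] [DecidableEq IB] {a : IA → A} {b : IB → A} (ha : ∀ x, a x * a x = 1)
    (hb : ∀ y, b y * b y = 1) (hab : ∀ x y, a x * b y = b y * a x) (G : Matrix IA IB ℝ)
    {r : IA → ℝ} (hr : ∀ x, r x ≠ 0) (c : IB → ℝ) :
    (1 / 2 * (∑ x, r x + ∑ y, c y)) • (1 : A) - ∑ x, ∑ y, G x y • (a x * b y) =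
      ∑ x, (r x / 2) • (a x - (r x)⁻¹ • ∑ y, G x y • b y) ^ 2 +
        (1 / 2 : ℝ) • quadForm b (diagonal c - Gᵀ * (diagonal r)⁻¹ * G) := by
  set S : IA → A := fun x => ∑ y, G x y • b y
  have hinv : (diagonal r)⁻¹ = diagonal r⁻¹ :=
    inv_eq_left_inv (by simp [diagonal_mul_diagonal, hr])
  have hschur : quadForm b (diagonal c - Gᵀ * (diagonal r)⁻¹ * G) =
      (∑ y, c y) • (1 : A) - ∑ x, (r x)⁻¹ • (S x * S x) := by
    rw [quadForm_sub, hinv, quadForm_transpose_mul_mul, quadForm_diagonal, quadForm_diagonal]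
    simp [S, hb, Finset.sum_smul]
  have hcross : ∀ x, a x * S x = ∑ y, G x y • (a x * b y) := by
    simp [S, Finset.mul_sum]
  have hS_comm : ∀ x, a x * S x = S x * a x := by
    simp [S, Finset.mul_sum, Finset.sum_mul, hab]
  rw [Finset.sum_congr rfl fun x _ => smul_sq_sub_inv_smul (ha x) (hS_comm x) (hr x), hschur]
  simp only [Finset.sum_add_distrib, Finset.sum_sub_distrib, hcross, ← Finset.sum_smul,
    ← Finset.smul_sum, ← Finset.sum_div]
  module

end RealAlgebra

section SumHermSq

variable {A : Type*} [Ring A] [StarRing A]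

def IsSumHermSq (x : A) : Prop := ∃ (k : ℕ) (q : Fin k → A), x = ∑ i, star (q i) * q i

theorem isSumHermSq_zero : IsSumHermSq (0 : A) := ⟨0, Fin.elim0, by simp⟩

theorem isSumHermSq_star_mul_self (q : A) : IsSumHermSq (star q * q) := ⟨1, fun _ => q, by simp⟩

theorem IsSumHermSq.add {x y : A} (hx : IsSumHermSq x) (hy : IsSumHermSq y) :
    IsSumHermSq (x + y) := by
  obtain ⟨k, q, rfl⟩ := hx
  obtain ⟨l, q', rfl⟩ := hy
  exact ⟨k + l, Fin.append q q', by simp [Fin.sum_univ_add]⟩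

theorem isSumHermSq_sum {ι : Type*} (s : Finset ι) {f : ι → A} (hf : ∀ i ∈ s, IsSumHermSq (f i)) :
    IsSumHermSq (∑ i ∈ s, f i) :=
  Finset.sum_induction f IsSumHermSq (fun _ _ => .add) isSumHermSq_zero hf

theorem IsSelfAdjoint.isSumHermSq_sq {u : A} (hu : IsSelfAdjoint u) : IsSumHermSq (u ^ 2) := by
  simpa [sq, hu.star_eq] using isSumHermSq_star_mul_self u

variable [Algebra ℝ A] [StarModule ℝ A]

theorem IsSumHermSq.smul {x : A} (hx : IsSumHermSq x) {t : ℝ} (ht : 0 ≤ t) :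
    IsSumHermSq (t • x) := by
  obtain ⟨k, q, rfl⟩ := hx
  refine ⟨k, fun i => √t • q i, ?_⟩
  simp only [Finset.smul_sum, star_smul, star_trivial, smul_mul_smul_comm, Real.mul_self_sqrt ht]

theorem isSelfAdjoint_sum_smul {ι : Type*} [Fintype ι] {b : ι → A} (hb : ∀ i, IsSelfAdjoint (b i))
    (v : ι → ℝ) : IsSelfAdjoint (∑ i, v i • b i) :=
  isSelfAdjoint_sum _ fun i _ => (IsSelfAdjoint.all (v i)).smul (hb i)

theorem isSumHermSq_quadForm {ι : Type*} [Fintype ι] [DecidableEq ι] {b : ι → A}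
    (hb : ∀ i, IsSelfAdjoint (b i)) {M : Matrix ι ι ℝ} (hM : M.PosSemidef) :
    IsSumHermSq (quadForm b M) := by
  obtain ⟨B, rfl⟩ : ∃ B : Matrix ι ι ℝ, M = Bᵀ * 1 * B := by
    open scoped MatrixOrder in
    obtain ⟨B, hB⟩ := CStarAlgebra.nonneg_iff_eq_star_mul_self.mp hM.nonneg
    exact ⟨B, by rw [hB, Matrix.mul_one]; rfl⟩
  rw [quadForm_transpose_mul_mul, ← diagonal_one, quadForm_diagonal]
  refine isSumHermSq_sum _ fun k _ => ?_
  simpa [sq] using (isSelfAdjoint_sum_smul hb (B k)).isSumHermSq_sq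

end SumHermSq

theorem posSemidef_sub_transpose_mul_inv_mul_of_fromBlocks {m n : Type*} [Fintype m] [Fintype n]
    [DecidableEq m] {D : Matrix m m ℝ} (hD : D.PosDef) {G : Matrix m n ℝ} {C : Matrix n n ℝ}
    (h : (fromBlocks D (-G) (-Gᵀ) C).PosSemidef) : (C - Gᵀ * D⁻¹ * G).PosSemidef := by
  have := hD.isUnit.invertible
  simpa [conjTranspose_eq_transpose_of_trivial] using (hD.fromBlocks₁₁ (-G) C).mp
    (by simpa [conjTranspose_eq_transpose_of_trivial] using h)

/-- the nice SOS certificate for XOR games. -/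
theorem stmt5 {A : Type*} [Ring A] [Algebra ℂ A] [StarRing A] [StarModule ℂ A]
    {IA IB : Type*} [Fintype IA] [Fintype IB] [DecidableEq IA] [DecidableEq IB]
    (a : IA → A) (b : IB → A)
    (ha_sa : ∀ x, star (a x) = a x) (hb_sa : ∀ y, star (b y) = b y)
    (ha_sq : ∀ x, a x * a x = 1) (hb_sq : ∀ y, b y * b y = 1)
    (hcomm : ∀ x y, a x * b y = b y * a x)
    (G : Matrix IA IB ℝ) (r : IA → ℝ) (c : IB → ℝ) (hr : ∀ x, 0 < r x)
    (hblock : (Matrix.fromBlocks (Matrix.diagonal r) (-G)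
        (-G.transpose) (Matrix.diagonal c)).PosSemidef)
    (β : ℝ) (hβ : β = (1 / 2) * (∑ x, r x + ∑ y, c y))
    (bhat : IA → A)
    (hbhat : ∀ x, bhat x = ((r x : ℂ))⁻¹ • ∑ y, (G x y : ℂ) • b y) :
    ((β : ℂ) • (1 : A) - ∑ x, ∑ y, (G x y : ℂ) • (a x * b y)
        = (∑ x, ((r x / 2 : ℝ) : ℂ) • (a x - bhat x) ^ 2)
          + (1 / 2 : ℂ) • ∑ s, ∑ y,
              (((Matrix.diagonal c - G.transpose * (Matrix.diagonal r)⁻¹ * G) s y : ℝ) : ℂ)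
                • (b s * b y))
      ∧ ∃ (k : ℕ) (q : Fin k → A),
          (β : ℂ) • (1 : A) - ∑ x, ∑ y, (G x y : ℂ) • (a x * b y)
            = ∑ i, star (q i) * q i := by
  have hbhat' : ∀ x, bhat x = (r x)⁻¹ • ∑ y, G x y • b y := fun x => by
    rw [hbhat x, ← Complex.ofReal_inv]
    simp only [Complex.coe_smul]
  -- Move to the real-algebra structure of `A`, in which the coefficients are real.
  rw [show (1 / 2 : ℂ) = ((1 / 2 : ℝ) : ℂ) by norm_num]
  simp only [Complex.coe_smul, hβ, hbhat']
  rw [bias_eq_sum_smul_sq_add_quadForm ha_sq hb_sq hcomm G (fun x => (hr x).ne') c]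
  refine ⟨rfl, IsSumHermSq.add (isSumHermSq_sum _ fun x _ => ?_) ?_⟩
  · have hsa : IsSelfAdjoint (a x - (r x)⁻¹ • ∑ y, G x y • b y) :=
      .sub (ha_sa x) ((IsSelfAdjoint.all _).smul (isSelfAdjoint_sum_smul hb_sa _))
    exact hsa.isSumHermSq_sq.smul (half_pos (hr x)).le
  · exact (isSumHermSq_quadForm hb_sa (posSemidef_sub_transpose_mul_inv_mul_of_fromBlocks
      (.diagonal hr) hblock)).smul (by norm_num)
end

section
/- Let H be a finite-dimensional complex Hilbert space and B₁, ..., B_n self-adjoint operators on H with B_y² = 1 for each y, all pairwise commuting with self-adjoint operators A₁, ..., A_m satisfying A_x² = 1. Let G be a real m × n matrix with ∑_y |G_{xy}| ≤ 1 for each x, and suppose for feasible dual variables (r, c) of the XOR SDP that β = (1/2)(∑ r_x + ∑ c_y). Then for any unit vector ψ, ∑_{x,y} G_{xy} ⟨ψ, A_x B_y ψ⟩ ≤ β. -/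
/-!
Each `A x`, `B y` is a self-adjoint involution, hence an isometry, so the vectors `A x ψ` and
`B y ψ` are unit vectors, and `⟪ψ, A x B y ψ⟫ = ⟪A x ψ, B y ψ⟫`. Pairing the positive
semidefinite block matrix entrywise with the (positive semidefinite, real) Gram matrix of these
vectors gives a nonnegative number by the Schur product theorem; expanded, it is
`∑ r + ∑ c - 2 ∑ G x y Re ⟪A x ψ, B y ψ⟫`.
-/

open scoped InnerProductSpace
open ContinuousLinearMap

section

open Matrix RCLike

variable {𝕜 E : Type*} [RCLike 𝕜]

section Seminormed

variable [SeminormedAddCommGroup E] [InnerProductSpace 𝕜 E]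

theorem Matrix.PosSemidef.sum_mul_re_inner_nonneg {ι : Type*} [Fintype ι] {M : Matrix ι ι ℝ}
    (hM : M.PosSemidef) (w : ι → E) :
    0 ≤ ∑ i, ∑ j, M i j * re ⟪w i, w j⟫_𝕜 := by
  let := InnerProductSpace.rclikeToReal 𝕜 E
  have := (hM.hadamard (posSemidef_gram ℝ w)).dotProduct_mulVec_nonneg 1
  simp only [star_one, Pi.one_apply, mulVec, dotProduct, one_mul, mul_one,
    hadamard_apply, gram_apply] at this
  exact this

theorem sum_mul_re_inner_le_of_posSemidef_fromBlocks {m n : Type*} [Fintype m] [Fintype n]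
    [DecidableEq m] [DecidableEq n] (G : Matrix m n ℝ) (r : m → ℝ) (c : n → ℝ)
    (hblock : (fromBlocks (diagonal r) (-G) (-Gᵀ) (diagonal c)).PosSemidef)
    (u : m → E) (v : n → E) (hu : ∀ x, ‖u x‖ = 1) (hv : ∀ y, ‖v y‖ = 1) :
    ∑ x, ∑ y, G x y * re ⟪u x, v y⟫_𝕜 ≤ (1 / 2) * (∑ x, r x + ∑ y, c y) := by
  have := hblock.sum_mul_re_inner_nonneg (𝕜 := 𝕜) (Sum.elim u v)
  have hsymm (x : m) (y : n) : re ⟪v y, u x⟫_𝕜 = re ⟪u x, v y⟫_𝕜 := inner_re_symm _ _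
  simp only [Fintype.sum_sum_type, Sum.elim_inl, Sum.elim_inr, fromBlocks_apply₁₁,
    fromBlocks_apply₁₂, fromBlocks_apply₂₁, fromBlocks_apply₂₂, Matrix.neg_apply,
    transpose_apply, diagonal_apply, ite_mul, zero_mul, Finset.sum_ite_eq, Finset.mem_univ,
    if_true, inner_self_eq_norm_sq, hu, hv, hsymm, one_pow, mul_one, neg_mul,
    Finset.sum_neg_distrib, Finset.sum_add_distrib] at this
  rw [Finset.sum_comm (s := (Finset.univ : Finset n))] at this
  linarith

end Seminormed

theorem IsSelfAdjoint.norm_map_of_comp_self_eq_one [NormedAddCommGroup E]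
    [InnerProductSpace 𝕜 E] [CompleteSpace E] {T : E →L[𝕜] E} (hT : IsSelfAdjoint T)
    (hT2 : T ∘L T = 1) (x : E) : ‖T x‖ = ‖x‖ := by
  refine T.norm_map_of_mem_unitary (Unitary.mem_iff.2 ?_) x
  rw [hT.star_eq]
  exact ⟨hT2, hT2⟩

end

theorem stmt6_general {H : Type*} [NormedAddCommGroup H] [InnerProductSpace ℂ H]
    [FiniteDimensional ℂ H]
    (m n : ℕ) (A : Fin m → H →L[ℂ] H) (B : Fin n → H →L[ℂ] H)
    (hAsa : ∀ x, IsSelfAdjoint (A x)) (hBsa : ∀ y, IsSelfAdjoint (B y))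
    (hAsq : ∀ x, A x ∘L A x = 1) (hBsq : ∀ y, B y ∘L B y = 1)
    (G : Matrix (Fin m) (Fin n) ℝ)
    (r : Fin m → ℝ) (c : Fin n → ℝ)
    (hblock : (Matrix.fromBlocks (Matrix.diagonal r) (-G)
        (-G.transpose) (Matrix.diagonal c)).PosSemidef)
    (β : ℝ) (hβ : β = (1 / 2) * (∑ x, r x + ∑ y, c y))
    (ψ : H) (hψ : ‖ψ‖ = 1) :
    ∑ x, ∑ y, G x y * (⟪ψ, (A x ∘L B y) ψ⟫_ℂ).re ≤ β := by
  have hAψ (x : Fin m) : ‖A x ψ‖ = 1 := by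
    rw [(hAsa x).norm_map_of_comp_self_eq_one (hAsq x), hψ]
  have hBψ (y : Fin n) : ‖B y ψ‖ = 1 := by
    rw [(hBsa y).norm_map_of_comp_self_eq_one (hBsq y), hψ]
  have hcorr (x : Fin m) (y : Fin n) : ⟪ψ, (A x ∘L B y) ψ⟫_ℂ = ⟪A x ψ, B y ψ⟫_ℂ :=
    ((hAsa x).isSymmetric ψ (B y ψ)).symm
  simp_rw [hcorr, hβ]
  exact sum_mul_re_inner_le_of_posSemidef_fromBlocks (𝕜 := ℂ) G r c hblock _ _ hAψ hBψ

/-- SDP (Tsirelson) upper bound on the commuting-operator bias of an XOR game. -/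
theorem stmt6 {H : Type*} [NormedAddCommGroup H] [InnerProductSpace ℂ H]
    [FiniteDimensional ℂ H]
    (m n : ℕ) (A : Fin m → H →L[ℂ] H) (B : Fin n → H →L[ℂ] H)
    (hAsa : ∀ x, IsSelfAdjoint (A x)) (hBsa : ∀ y, IsSelfAdjoint (B y))
    (hAsq : ∀ x, A x ∘L A x = 1) (hBsq : ∀ y, B y ∘L B y = 1)
    (hcomm : ∀ x y, A x ∘L B y = B y ∘L A x)
    (G : Matrix (Fin m) (Fin n) ℝ) (habs : ∀ x, ∑ y, |G x y| ≤ 1)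
    (r : Fin m → ℝ) (c : Fin n → ℝ) (hr : ∀ x, 0 < r x)
    (hblock : (Matrix.fromBlocks (Matrix.diagonal r) (-G)
        (-G.transpose) (Matrix.diagonal c)).PosSemidef)
    (β : ℝ) (hβ : β = (1 / 2) * (∑ x, r x + ∑ y, c y))
    (ψ : H) (hψ : ‖ψ‖ = 1) :
    ∑ x, ∑ y, G x y * (⟪ψ, (A x ∘L B y) ψ⟫_ℂ).re ≤ β :=
  stmt6_general m n A B hAsa hBsa hAsq hBsq G r c hblock β hβ ψ hψ
end

section
/- Let H be a finite-dimensional Hilbert space, ψ a state vector, {A_α} Kraus operators with ∑_α A_α* A_α = 1, signs ε_α ∈ {±1}, and B a self-adjoint operator with ‖B‖ ≤ 1. Let r ∈ [0,1]. If √(∑_α ⟨A_α ψ, B² A_α ψ⟩) − ∑_α ε_α ⟨A_α ψ, B A_α ψ⟩ ≤ ε' and (r − √(∑_α ⟨A_α ψ, B² A_α ψ⟩))² ≤ δ, then ∑_α ‖(r·1 − ε_α B) A_α ψ‖² ≤ δ + 2ε'. -/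
/-!
Write `v α = A α ψ`, `S₁ = ∑ ε α re⟪v α, B v α⟫` and `s = √(∑ ‖B v α‖²)`. The Kraus condition gives
`∑ ‖v α‖² = 1`, so expanding the squares turns the left-hand side into `r² - 2 r S₁ + s²`, and
Cauchy–Schwarz gives `S₁ ≤ s`. Hence the left-hand side is `(r - s)² + 2 r (s - S₁)`, and
`r (s - S₁) ≤ s - S₁ ≤ ε'` since `r ≤ 1`.
-/

open scoped InnerProductSpace
open ContinuousLinearMap

section

variable {𝕜 E : Type*} [RCLike 𝕜] [NormedAddCommGroup E] [InnerProductSpace 𝕜 E]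

theorem sum_norm_sq_apply_of_sum_adjoint_comp_self_eq_one [CompleteSpace E] {Λ : Type*}
    [Fintype Λ] {A : Λ → E →L[𝕜] E} (hA : ∑ α, adjoint (A α) ∘L A α = 1) (x : E) :
    ∑ α, ‖A α x‖ ^ 2 = ‖x‖ ^ 2 := by
  have hx : ⟪x, (∑ α, adjoint (A α) ∘L A α) x⟫_𝕜 = ∑ α, (‖A α x‖ ^ 2 : 𝕜) := by
    simp only [sum_apply, inner_sum, comp_apply, adjoint_inner_right, inner_self_eq_norm_sq_to_K]
  rw [hA, one_apply_eq_self, inner_self_eq_norm_sq_to_K] at hx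
  exact_mod_cast hx.symm

theorem IsSelfAdjoint.re_inner_comp_self_apply {B : E →L[𝕜] E} [CompleteSpace E]
    (hB : IsSelfAdjoint B) (v : E) :
    RCLike.re ⟪v, (B ∘L B) v⟫_𝕜 = ‖B v‖ ^ 2 := by
  rw [comp_apply, ← adjoint_inner_left, hB.adjoint_eq, inner_self_eq_norm_sq]

theorem sum_mul_re_inner_le_sqrt_mul_sqrt {Λ : Type*} [Fintype Λ] {ε : Λ → ℝ}
    (hε : ∀ α, |ε α| = 1) (v w : Λ → E) :
    ∑ α, ε α * RCLike.re ⟪v α, w α⟫_𝕜 ≤ √(∑ α, ‖v α‖ ^ 2) * √(∑ α, ‖w α‖ ^ 2) :=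
  calc ∑ α, ε α * RCLike.re ⟪v α, w α⟫_𝕜 ≤ ∑ α, ‖v α‖ * ‖w α‖ := by
        refine Finset.sum_le_sum fun α _ => ?_
        calc ε α * RCLike.re ⟪v α, w α⟫_𝕜 ≤ |ε α * RCLike.re ⟪v α, w α⟫_𝕜| := le_abs_self _
          _ = |RCLike.re ⟪v α, w α⟫_𝕜| := by rw [abs_mul, hε, one_mul]
          _ ≤ ‖⟪v α, w α⟫_𝕜‖ := RCLike.abs_re_le_norm _
          _ ≤ ‖v α‖ * ‖w α‖ := norm_inner_le_norm _ _
    _ ≤ √(∑ α, ‖v α‖ ^ 2) * √(∑ α, ‖w α‖ ^ 2) := Real.sum_mul_le_sqrt_mul_sqrt _ _ _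

theorem norm_smul_one_sub_smul_apply_sq (r e : ℝ) (he : |e| = 1) (B : E →L[𝕜] E) (v : E) :
    ‖((r : 𝕜) • (1 : E →L[𝕜] E) - (e : 𝕜) • B) v‖ ^ 2
      = r ^ 2 * ‖v‖ ^ 2 - 2 * (r * (e * RCLike.re ⟪v, B v⟫_𝕜)) + ‖B v‖ ^ 2 := by
  rw [sub_apply, smul_apply, smul_apply, one_apply_eq_self, norm_sub_sq (𝕜 := 𝕜), norm_smul,
    norm_smul, inner_smul_left, inner_smul_right]
  simp [he, mul_pow]

end

theorem stmt7_general {H : Type*} [NormedAddCommGroup H] [InnerProductSpace ℂ H]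
    [FiniteDimensional ℂ H]
    {Λ : Type*} [Fintype Λ]
    (ψ : H) (hψ : ‖ψ‖ = 1)
    (A : Λ → H →L[ℂ] H)
    (hA : ∑ α, ContinuousLinearMap.adjoint (A α) ∘L A α = 1)
    (ε : Λ → ℝ) (hε : ∀ α, ε α = 1 ∨ ε α = -1)
    (B : H →L[ℂ] H) (hB : IsSelfAdjoint B)
    (r : ℝ) (hr1 : r ≤ 1)
    (ε' δ : ℝ)
    (h1 : Real.sqrt (∑ α, (⟪A α ψ, (B ∘L B) (A α ψ)⟫_ℂ).re)
        - ∑ α, ε α * (⟪A α ψ, B (A α ψ)⟫_ℂ).re ≤ ε')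
    (h2 : (r - Real.sqrt (∑ α, (⟪A α ψ, (B ∘L B) (A α ψ)⟫_ℂ).re)) ^ 2 ≤ δ) :
    ∑ α, ‖((r : ℂ) • (1 : H →L[ℂ] H) - (ε α : ℂ) • B) (A α ψ)‖ ^ 2 ≤ δ + 2 * ε' := by
  have hεabs : ∀ α, |ε α| = 1 := fun α => by rcases hε α with h | h <;> simp [h]
  have hkraus : ∑ α, ‖A α ψ‖ ^ 2 = 1 := by
    rw [sum_norm_sq_apply_of_sum_adjoint_comp_self_eq_one hA, hψ, one_pow]
  have hB2 : ∑ α, (⟪A α ψ, (B ∘L B) (A α ψ)⟫_ℂ).re = ∑ α, ‖B (A α ψ)‖ ^ 2 :=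
    Finset.sum_congr rfl fun α _ => hB.re_inner_comp_self_apply _
  have hCS : ∑ α, ε α * (⟪A α ψ, B (A α ψ)⟫_ℂ).re ≤ √(∑ α, ‖B (A α ψ)‖ ^ 2) := by
    have h := sum_mul_re_inner_le_sqrt_mul_sqrt (𝕜 := ℂ) hεabs (fun α => A α ψ)
      (fun α => B (A α ψ))
    rwa [hkraus, Real.sqrt_one, one_mul] at h
  rw [hB2] at h1 h2
  have hexpand : ∀ α, ‖((r : ℂ) • (1 : H →L[ℂ] H) - (ε α : ℂ) • B) (A α ψ)‖ ^ 2
      = r ^ 2 * ‖A α ψ‖ ^ 2 - 2 * (r * (ε α * (⟪A α ψ, B (A α ψ)⟫_ℂ).re)) + ‖B (A α ψ)‖ ^ 2 :=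
    fun α => norm_smul_one_sub_smul_apply_sq r _ (hεabs α) B _
  simp only [hexpand, Finset.sum_add_distrib, Finset.sum_sub_distrib, ← Finset.mul_sum, hkraus]
  have hsq := Real.sq_sqrt (Finset.univ.sum_nonneg fun α _ => sq_nonneg ‖B (A α ψ)‖)
  nlinarith [mul_nonneg (sub_nonneg.2 hr1) (sub_nonneg.2 hCS)]

/-- key estimate in the self-testing lemma for compiled XOR games. -/
theorem stmt7 {H : Type*} [NormedAddCommGroup H] [InnerProductSpace ℂ H]
    [FiniteDimensional ℂ H]
    {Λ : Type*} [Fintype Λ]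
    (ψ : H) (hψ : ‖ψ‖ = 1)
    (A : Λ → H →L[ℂ] H)
    (hA : ∑ α, ContinuousLinearMap.adjoint (A α) ∘L A α = 1)
    (ε : Λ → ℝ) (hε : ∀ α, ε α = 1 ∨ ε α = -1)
    (B : H →L[ℂ] H) (hB : IsSelfAdjoint B) (hBnorm : ‖B‖ ≤ 1)
    (r : ℝ) (hr0 : 0 ≤ r) (hr1 : r ≤ 1)
    (ε' δ : ℝ) (hε' : 0 ≤ ε')
    (h1 : Real.sqrt (∑ α, (⟪A α ψ, (B ∘L B) (A α ψ)⟫_ℂ).re)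
        - ∑ α, ε α * (⟪A α ψ, B (A α ψ)⟫_ℂ).re ≤ ε')
    (h2 : (r - Real.sqrt (∑ α, (⟪A α ψ, (B ∘L B) (A α ψ)⟫_ℂ).re)) ^ 2 ≤ δ) :
    ∑ α, ‖((r : ℂ) • (1 : H →L[ℂ] H) - (ε α : ℂ) • B) (A α ψ)‖ ^ 2 ≤ δ + 2 * ε' :=
  stmt7_general ψ hψ A hA ε hε B hB r hr1 ε' δ h1 h2
end
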